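/- arXiv:1009.4383 — 2 statements merged into one kernel-verified Lean document; each statement's English description precedes it below -/
import Mathlib

section
/- Let G = (V, E) be a finite undirected simple graph and let k be a positive integer with k ≤ |V|. Suppose v_1, …, v_k is a greedy sequence of distinct vertices: writing S_0 = ∅ and S_i = {v_1, …, v_i}, for each i the vertex v_{i+1} maximizes |cov(S_i ∪ {v}) \ cov(S_i)| over all v ∈ V \ S_i. Then for every i with 1 ≤ i ≤ k, the intermediate coverage satisfies |cov(S_i)| ≥ (1 − (1 − 1/k)^i) · max_{T ⊆ V, |T| = k} |cov(T)|. -/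
open Finset

/-- The neighborhood `N(S)` of a set of vertices `S`: all vertices outside `S`
adjacent to some vertex of `S`. -/
def nbhd {V : Type*} [Fintype V] [DecidableEq V] (G : SimpleGraph V) [DecidableRel G.Adj]
    (S : Finset V) : Finset V :=
  Finset.univ.filter fun w => w ∉ S ∧ ∃ v ∈ S, G.Adj v w

/-- The set of nodes covered by `S`: `cov(S) = N(S) ∪ S`. -/
def cov {V : Type*} [Fintype V] [DecidableEq V] (G : SimpleGraph V) [DecidableRel G.Adj]
    (S : Finset V) : Finset V :=
  nbhd G S ∪ S

/-!
By submodularity of coverage, every vertex of an optimal `k`-set adds at most the greedy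
gain `g` of the next step to `cov S_i`, so `OPT ≤ |cov S_i| + k g`. Hence the uncovered part
of the optimum, `OPT - |cov S_i|`, shrinks by a factor `1 - 1/k` at every step.
-/

section Coverage

variable {V : Type*} [Fintype V] [DecidableEq V] (G : SimpleGraph V) [DecidableRel G.Adj]

lemma mem_cov {S : Finset V} {x : V} : x ∈ cov G S ↔ x ∈ S ∨ ∃ v ∈ S, G.Adj v x := by
  simp only [cov, nbhd, mem_union, mem_filter, mem_univ, true_and]
  by_cases h : x ∈ S <;> simp [h]

lemma cov_mono {A B : Finset V} (h : A ⊆ B) : cov G A ⊆ cov G B := by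
  intro x hx
  rw [mem_cov] at hx ⊢
  rcases hx with hxA | ⟨u, huA, hadj⟩
  · exact Or.inl (h hxA)
  · exact Or.inr ⟨u, h huA, hadj⟩

lemma card_cov_le_card_cov_add_sum (S T : Finset V) :
    #(cov G T) ≤ #(cov G S) + ∑ w ∈ T, #(cov G (insert w S) \ cov G S) := by
  have hsub : cov G T \ cov G S ⊆ T.biUnion fun w => cov G (insert w S) \ cov G S := by
    intro y hy
    obtain ⟨hyT, hyS⟩ := mem_sdiff.1 hy
    rw [mem_biUnion]
    rcases (mem_cov G).1 hyT with hyT | ⟨u, huT, hadj⟩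
    · exact ⟨y, hyT, mem_sdiff.2 ⟨(mem_cov G).2 (Or.inl (mem_insert_self y S)), hyS⟩⟩
    · exact ⟨u, huT, mem_sdiff.2
        ⟨(mem_cov G).2 (Or.inr ⟨u, mem_insert_self u S, hadj⟩), hyS⟩⟩
  calc #(cov G T) ≤ #(cov G T \ cov G S) + #(cov G S) := card_le_card_sdiff_add_card
    _ ≤ (∑ w ∈ T, #(cov G (insert w S) \ cov G S)) + #(cov G S) := by
      gcongr
      exact (card_le_card hsub).trans card_biUnion_le
    _ = _ := add_comm _ _

lemma card_cov_le_card_cov_add_card_mul (S T : Finset V) {g : ℕ}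
    (hg : ∀ w ∉ S, #(cov G (insert w S) \ cov G S) ≤ g) :
    #(cov G T) ≤ #(cov G S) + #T * g := by
  have hgain : ∀ w ∈ T, #(cov G (insert w S) \ cov G S) ≤ g := by
    intro w _
    by_cases hw : w ∈ S
    · simp [insert_eq_of_mem hw]
    · exact hg w hw
  calc #(cov G T) ≤ #(cov G S) + ∑ w ∈ T, #(cov G (insert w S) \ cov G S) :=
        card_cov_le_card_cov_add_sum G S T
    _ ≤ #(cov G S) + #T * g := by
      gcongr
      simpa using sum_le_card_nsmul T _ g hgain

end Coverage

lemma image_filter_val_lt_succ {V : Type*} [DecidableEq V] {k : ℕ} (v : Fin k → V)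
    (i : ℕ) (hi : i < k) :
    (univ.filter fun j : Fin k => (j : ℕ) < i + 1).image v =
      insert (v ⟨i, hi⟩) ((univ.filter fun j : Fin k => (j : ℕ) < i).image v) := by
  rw [← image_insert]
  congr 1
  ext j
  simp only [mem_filter, mem_univ, true_and, mem_insert, Fin.ext_iff]
  omega

lemma one_sub_one_sub_inv_pow_mul_le {k M : ℝ} (hk : 1 ≤ k) {a : ℕ → ℝ} {n : ℕ}
    (h0 : 0 ≤ a 0) (hstep : ∀ i < n, M ≤ a i + k * (a (i + 1) - a i)) :
    ∀ i ≤ n, (1 - (1 - 1 / k) ^ i) * M ≤ a i := by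
  have hq : 0 ≤ 1 - 1 / k := by
    rw [sub_nonneg, div_le_one (by linarith)]
    exact hk
  intro i hi
  induction i with
  | zero => simpa using h0
  | succ i ih =>
    have hgain : (M - a i) / k ≤ a (i + 1) - a i := by
      rw [div_le_iff₀ (by linarith)]
      linarith [hstep i hi]
    have hgap : M - a (i + 1) ≤ (1 - 1 / k) * (M - a i) := by
      have hsplit : (1 - 1 / k) * (M - a i) = (M - a i) - (M - a i) / k := by ring
      linarith
    have hrest : M - a i ≤ (1 - 1 / k) ^ i * M := by linarith [ih (by omega)]
    calc (1 - (1 - 1 / k) ^ (i + 1)) * M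
        = M - (1 - 1 / k) * ((1 - 1 / k) ^ i * M) := by ring
      _ ≤ M - (1 - 1 / k) * (M - a i) := by gcongr
      _ ≤ a (i + 1) := by linarith

theorem greedy_apx_intermediate_general {V : Type*} [Fintype V] [DecidableEq V]
    (G : SimpleGraph V) [DecidableRel G.Adj]
    (k : ℕ)
    (v : Fin k → V)
    (S : ℕ → Finset V)
    (hS : ∀ i : ℕ, S i = (Finset.univ.filter fun j : Fin k => (j : ℕ) < i).image v)
    (hgreedy : ∀ i : Fin k, ∀ w : V, w ∉ S i.val →
      (cov G (insert w (S i.val)) \ cov G (S i.val)).card ≤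
        (cov G (insert (v i) (S i.val)) \ cov G (S i.val)).card) :
    ∀ i : ℕ, 1 ≤ i → i ≤ k →
      ((cov G (S i)).card : ℝ) ≥
        (1 - (1 - 1 / (k : ℝ)) ^ i) *
          (((Finset.powersetCard k (Finset.univ : Finset V)).sup
            fun T => (cov G T).card : ℕ) : ℝ) := by
  intro i hi hik
  refine one_sub_one_sub_inv_pow_mul_le (k := k) (a := fun j => (#(cov G (S j)) : ℝ))
    (by exact_mod_cast hi.trans hik) (by positivity) (fun j hj => ?_) i hik
  have hstep : S (j + 1) = insert (v ⟨j, hj⟩) (S j) := by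
    rw [hS, hS, image_filter_val_lt_succ v j hj]
  have hopt : (powersetCard k univ).sup (fun T => #(cov G T)) ≤
      #(cov G (S j)) + k * #(cov G (insert (v ⟨j, hj⟩) (S j)) \ cov G (S j)) := by
    refine Finset.sup_le fun T hT => ?_
    simpa only [(mem_powersetCard.1 hT).2] using
      card_cov_le_card_cov_add_card_mul G (S j) T (hgreedy ⟨j, hj⟩)
  have hgain := card_sdiff_add_card_eq_card (cov_mono G (subset_insert (v ⟨j, hj⟩) (S j)))
  simp only [hstep, ← hgain, Nat.cast_add, add_sub_cancel_right]
  exact_mod_cast hopt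

/-- **Intermediate greedy bound.** For a greedy sequence of distinct vertices, after
`i` steps (`1 ≤ i ≤ k`) the coverage is at least `(1 - (1 - 1/k)^i)` times the optimum
coverage over all `k`-vertex samples. -/
theorem greedy_apx_intermediate {V : Type*} [Fintype V] [DecidableEq V]
    (G : SimpleGraph V) [DecidableRel G.Adj]
    (k : ℕ) (hk : 1 ≤ k) (hkV : k ≤ Fintype.card V)
    (v : Fin k → V) (hinj : Function.Injective v)
    (S : ℕ → Finset V)
    (hS : ∀ i : ℕ, S i = (Finset.univ.filter fun j : Fin k => (j : ℕ) < i).image v)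
    (hgreedy : ∀ i : Fin k, ∀ w : V, w ∉ S i.val →
      (cov G (insert w (S i.val)) \ cov G (S i.val)).card ≤
        (cov G (insert (v i) (S i.val)) \ cov G (S i.val)).card) :
    ∀ i : ℕ, 1 ≤ i → i ≤ k →
      ((cov G (S i)).card : ℝ) ≥
        (1 - (1 - 1 / (k : ℝ)) ^ i) *
          (((Finset.powersetCard k (Finset.univ : Finset V)).sup
            fun T => (cov G T).card : ℕ) : ℝ) :=
  greedy_apx_intermediate_general G k v S hS hgreedy
end

section
/- Let U be a finite set and C_1, …, C_m ⊆ U (m ≥ 1) with ⋃_{i=1}^m C_i = U, and let G be the graph of the Maximum Coverage reduction built from this instance. Then for every nonempty set S ⊆ I of index vertices with |S| = k, the neighborhood of S in G is exactly N(S) = (I \ S) ∪ ⋃_{i ∈ S} C_i, and hence |N(S)| = (m − k) + |⋃_{i ∈ S} C_i|. (This is the forward direction of the reduction in the proof of Proposition 1: k-element index sets of maximum expansion correspond to k-element subfamilies of maximum union.) -/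
open Finset

/-- The graph of the Maximum Coverage reduction: vertex set `I ⊎ U` with
`I = Fin m` a clique of index vertices, `U` an independent set, and an edge
between index vertex `i` and element `u` exactly when `u ∈ C i`. -/
def redGraph {U : Type*} [DecidableEq U] (m : ℕ) (C : Fin m → Finset U) :
    SimpleGraph (Fin m ⊕ U) where
  Adj x y := match x, y with
    | Sum.inl i, Sum.inl j => i ≠ j
    | Sum.inl i, Sum.inr u => u ∈ C i
    | Sum.inr u, Sum.inl i => u ∈ C i
    | Sum.inr _, Sum.inr _ => False
  symm := by
    constructor
    rintro (i | u) (j | w) h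
    · exact h.symm
    · exact h
    · exact h
    · exact h
  loopless := by
    constructor
    rintro (i | u) h
    · exact h rfl
    · exact h

instance {U : Type*} [DecidableEq U] (m : ℕ) (C : Fin m → Finset U) :
    DecidableRel (redGraph m C).Adj := fun x y =>
  match x, y with
  | Sum.inl i, Sum.inl j => inferInstanceAs (Decidable (i ≠ j))
  | Sum.inl i, Sum.inr u => inferInstanceAs (Decidable (u ∈ C i))
  | Sum.inr u, Sum.inl i => inferInstanceAs (Decidable (u ∈ C i))
  | Sum.inr _, Sum.inr _ => inferInstanceAs (Decidable False)

theorem mem_nbhd {V : Type*} [Fintype V] [DecidableEq V] {G : SimpleGraph V} [DecidableRel G.Adj]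
    {S : Finset V} {w : V} : w ∈ nbhd G S ↔ w ∉ S ∧ ∃ v ∈ S, G.Adj v w := by
  simp [nbhd]

theorem Finset.card_image_inl_union_image_inr {α β : Type*} [DecidableEq α] [DecidableEq β]
    (s : Finset α) (t : Finset β) :
    (s.image Sum.inl ∪ t.image Sum.inr).card = s.card + t.card := by
  rw [card_union_of_disjoint (disjoint_left.2 (by simp)),
    card_image_of_injective _ Sum.inl_injective, card_image_of_injective _ Sum.inr_injective]

section redGraph

variable {U : Type*} [DecidableEq U] {m : ℕ} {C : Fin m → Finset U}

@[simp]
theorem redGraph_adj_inl_inl {i j : Fin m} : (redGraph m C).Adj (.inl i) (.inl j) ↔ i ≠ j :=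
  Iff.rfl

@[simp]
theorem redGraph_adj_inl_inr {i : Fin m} {u : U} : (redGraph m C).Adj (.inl i) (.inr u) ↔ u ∈ C i :=
  Iff.rfl

variable [Fintype U] {T : Finset (Fin m)}

theorem inl_mem_nbhd_redGraph_image_inl (hT : T.Nonempty) {j : Fin m} :
    Sum.inl j ∈ nbhd (redGraph m C) (T.image Sum.inl) ↔ j ∉ T := by
  obtain ⟨i, hi⟩ := hT
  simp only [mem_nbhd, mem_image, Sum.inl.injEq, exists_eq_right, exists_exists_and_eq_and,
    redGraph_adj_inl_inl, and_iff_left_iff_imp]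
  exact fun hj => ⟨i, hi, fun hij => hj (hij ▸ hi)⟩

theorem inr_mem_nbhd_redGraph_image_inl {u : U} :
    Sum.inr u ∈ nbhd (redGraph m C) (T.image Sum.inl) ↔ u ∈ T.biUnion C := by
  simp [mem_nbhd]

theorem nbhd_redGraph_image_inl (hT : T.Nonempty) :
    nbhd (redGraph m C) (T.image Sum.inl) =
      (univ \ T).image Sum.inl ∪ (T.biUnion C).image Sum.inr := by
  ext (j | u)
  · simp [inl_mem_nbhd_redGraph_image_inl hT]
  · simp only [inr_mem_nbhd_redGraph_image_inl, mem_union, mem_image, reduceCtorEq, and_false,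
      exists_false, Sum.inr.injEq, exists_eq_right, false_or]

end redGraph

theorem reduction_nbhd_of_index_set_general {U : Type*} [Fintype U] [DecidableEq U]
    (m k : ℕ) (C : Fin m → Finset U)
    (T : Finset (Fin m)) (hT : T.Nonempty) (hTcard : T.card = k) :
    nbhd (redGraph m C) (T.image Sum.inl) =
      ((Finset.univ \ T).image Sum.inl) ∪ ((T.biUnion C).image Sum.inr) ∧
    (nbhd (redGraph m C) (T.image Sum.inl)).card = (m - k) + (T.biUnion C).card := by
  have hN := nbhd_redGraph_image_inl (C := C) hT
  refine ⟨hN, ?_⟩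
  rw [hN, card_image_inl_union_image_inr, card_univ_sdiff, Fintype.card_fin, hTcard]

/-- **Forward direction of the reduction in Proposition 1.** For every nonempty
`k`-element set `T` of index vertices, the neighborhood of `S = T.image Sum.inl`
in the reduction graph is exactly `(I \ S) ∪ ⋃_{i ∈ T} C_i`, and hence its
cardinality is `(m - k) + |⋃_{i ∈ T} C_i|`. -/
theorem reduction_nbhd_of_index_set {U : Type*} [Fintype U] [DecidableEq U]
    (m k : ℕ) (hm : 1 ≤ m) (C : Fin m → Finset U)
    (hU : ∀ u : U, ∃ i : Fin m, u ∈ C i)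
    (T : Finset (Fin m)) (hT : T.Nonempty) (hTcard : T.card = k) :
    nbhd (redGraph m C) (T.image Sum.inl) =
      ((Finset.univ \ T).image Sum.inl) ∪ ((T.biUnion C).image Sum.inr) ∧
    (nbhd (redGraph m C) (T.image Sum.inl)).card = (m - k) + (T.biUnion C).card :=
  reduction_nbhd_of_index_set_general m k C T hT hTcard
end
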